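/- Under the assumptions of Theorem 4.6 (Hessian of E is M-Lipschitz with eigenvalue moduli in [μ,L] on U(x*,δ); perturbation E_δ with ∇E_δ, ∇²E_δ ε-small and ∇²E_δ ε-Lipschitz; ε ≤ min{μ/2, μ²/(32M), μδ/12, M}), the surrogate E_NN = E + E_δ satisfies on the ball U(x*_NN, 2δ/3): (i) ‖∇²E_NN(x) − ∇²E_NN(y)‖₂ ≤ 2M‖x−y‖₂; (ii) every eigenvalue of ∇²E_NN(x) has modulus in [μ−ε, L+ε] and exactly k eigenvalues are negative, where x*_NN is the critical point of E_NN with ‖x*_NN − x*‖₂ ≤ 4ε/μ. -/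

import Mathlib

/-- The Morse index of an endomorphism: the dimension of the span of the eigenspaces
associated with negative eigenvalues. -/
noncomputable def morseIndex {d : ℕ}
    (T : Module.End ℝ (EuclideanSpace ℝ (Fin d))) : ℕ :=
  Module.finrank ℝ ↥(⨆ t : ℝ, ⨆ _ : t < 0, Module.End.eigenspace T t)

/-!
The Hessian of `E_NN = E + E_δ` is that of `E` plus a symmetric perturbation of operator norm
at most `ε`, and the ball `U(x*_NN, 2δ/3)` lies in `U(x*, δ)` since `4ε/μ ≤ δ/3`. Lipschitz
constants add, and by the Bauer–Fike inequality for symmetric maps every eigenvalue moves by at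
most `ε`. The number of negative eigenvalues is stable: a vector in the negative eigenspace of one
map and orthogonal to the negative eigenspace of the other would have quadratic forms `≤ -(μ-ε)‖v‖²`
and `≥ μ‖v‖²` differing by at most `ε‖v‖²`, which is impossible for `v ≠ 0` as `ε < 2μ - ε`;
hence the two negative eigenspaces have the same dimension.
-/

open Module InnerProductSpace
open scoped RealInnerProductSpace

def negEigenspace {V : Type*} [AddCommGroup V] [Module ℝ V] (T : Module.End ℝ V) :
    Submodule ℝ V :=
  ⨆ t : ℝ, ⨆ _ : t < 0, Module.End.eigenspace T t

namespace LinearMap.IsSymmetric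

variable {V : Type*} [NormedAddCommGroup V] [InnerProductSpace ℝ V] [FiniteDimensional ℝ V]
  {T : V →ₗ[ℝ] V}

theorem inner_eigenvectorBasis_sub_smul (hT : T.IsSymmetric) (t : ℝ) (v : V)
    (i : Fin (finrank ℝ V)) :
    ⟪hT.eigenvectorBasis rfl i, T v - t • v⟫ =
      (hT.eigenvalues rfl i - t) * ⟪hT.eigenvectorBasis rfl i, v⟫ := by
  rw [inner_sub_right, inner_smul_right, ← hT, hT.apply_eigenvectorBasis, inner_smul_left]
  simp only [RCLike.conj_to_real, RCLike.ofReal_real_eq_id, id_eq]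
  ring

theorem norm_sub_smul_sq_eq_sum (hT : T.IsSymmetric) (t : ℝ) (v : V) :
    ‖T v - t • v‖ ^ 2 =
      ∑ i, (hT.eigenvalues rfl i - t) ^ 2 * ⟪hT.eigenvectorBasis rfl i, v⟫ ^ 2 := by
  simp_rw [← (hT.eigenvectorBasis rfl).sum_sq_inner_right, inner_eigenvectorBasis_sub_smul, mul_pow]

theorem inner_apply_self_eq_sum (hT : T.IsSymmetric) (v : V) :
    ⟪T v, v⟫ = ∑ i, hT.eigenvalues rfl i * ⟪hT.eigenvectorBasis rfl i, v⟫ ^ 2 := by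
  rw [← (hT.eigenvectorBasis rfl).sum_inner_mul_inner]
  refine Finset.sum_congr rfl fun i _ => ?_
  have := hT.inner_eigenvectorBasis_sub_smul 0 v i
  rw [zero_smul, sub_zero, sub_zero] at this
  rw [real_inner_comm, this]; ring

/-- The Bauer–Fike inequality for symmetric maps. -/
theorem exists_hasEigenvalue_abs_sub_le (hT : T.IsSymmetric) {S : V →ₗ[ℝ] V} {ε : ℝ}
    (hST : ∀ v, ‖S v - T v‖ ≤ ε * ‖v‖) {lam : ℝ} (hlam : Module.End.HasEigenvalue S lam) :
    ∃ t, Module.End.HasEigenvalue T t ∧ |lam - t| ≤ ε := by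
  obtain ⟨v, hv⟩ := hlam.exists_hasEigenvector
  have : Nontrivial V := nontrivial_of_ne v 0 hv.2
  obtain ⟨i, -, hi⟩ := Finset.exists_min_image Finset.univ
    (fun i => |hT.eigenvalues rfl i - lam|) ⟨⟨0, finrank_pos⟩, Finset.mem_univ _⟩
  refine ⟨_, hT.hasEigenvalue_eigenvalues rfl i, abs_sub_comm lam _ ▸ ?_⟩
  have hSv : S v = lam • v := Module.End.mem_eigenspace_iff.mp hv.1
  have hvpos : 0 < ‖v‖ := norm_pos_iff.mpr hv.2
  have hε : 0 ≤ ε := nonneg_of_mul_nonneg_left ((norm_nonneg _).trans (hST v)) hvpos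
  have hsq : (|hT.eigenvalues rfl i - lam| * ‖v‖) ^ 2 ≤ (ε * ‖v‖) ^ 2 := calc
    _ = ∑ j, |hT.eigenvalues rfl i - lam| ^ 2 * ⟪hT.eigenvectorBasis rfl j, v⟫ ^ 2 := by
      rw [mul_pow, ← (hT.eigenvectorBasis rfl).sum_sq_inner_right, Finset.mul_sum]
    _ ≤ ∑ j, (hT.eigenvalues rfl j - lam) ^ 2 * ⟪hT.eigenvectorBasis rfl j, v⟫ ^ 2 := by
      gcongr ∑ j, ?_ * _ with j
      rw [← sq_abs (_ - lam)]
      exact pow_le_pow_left₀ (abs_nonneg _) (hi j (Finset.mem_univ j)) 2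
    _ = ‖S v - T v‖ ^ 2 := by rw [← hT.norm_sub_smul_sq_eq_sum, hSv, norm_sub_rev]
    _ ≤ (ε * ‖v‖) ^ 2 := by gcongr; exact hST v
  exact le_of_mul_le_mul_right (pow_le_pow_iff_left₀ (by positivity) (by positivity) two_ne_zero
    |>.mp hsq) hvpos

theorem abs_eigenvalue_mem_Icc_of_norm_sub_le (hT : T.IsSymmetric) {a b : ℝ}
    (hTab : ∀ t, Module.End.HasEigenvalue T t → |t| ∈ Set.Icc a b) {S : V →ₗ[ℝ] V} {ε : ℝ}
    (hST : ∀ v, ‖S v - T v‖ ≤ ε * ‖v‖) {lam : ℝ} (hlam : Module.End.HasEigenvalue S lam) :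
    |lam| ∈ Set.Icc (a - ε) (b + ε) := by
  obtain ⟨t, ht, hlt⟩ := hT.exists_hasEigenvalue_abs_sub_le hST hlam
  obtain ⟨hat, htb⟩ := hTab t ht
  have h₁ := abs_sub_abs_le_abs_sub lam t
  have h₂ := abs_sub_abs_le_abs_sub t lam
  rw [abs_sub_comm t] at h₂
  constructor <;> linarith

theorem eigenvectorBasis_mem_negEigenspace (hT : T.IsSymmetric) {i : Fin (finrank ℝ V)}
    (hi : hT.eigenvalues rfl i < 0) : hT.eigenvectorBasis rfl i ∈ negEigenspace T :=
  Submodule.mem_iSup_of_mem _ <| Submodule.mem_iSup_of_mem hi <|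
    Module.End.mem_eigenspace_iff.mpr (hT.apply_eigenvectorBasis rfl i)

theorem inner_eigenvectorBasis_eq_zero_of_mem_negEigenspace (hT : T.IsSymmetric) {v : V}
    (hv : v ∈ negEigenspace T) {i : Fin (finrank ℝ V)} (hi : 0 ≤ hT.eigenvalues rfl i) :
    ⟪hT.eigenvectorBasis rfl i, v⟫ = 0 := by
  refine (iSup₂_le (fun t ht w hw => ?_) : negEigenspace T ≤
    LinearMap.ker (innerₛₗ ℝ (hT.eigenvectorBasis rfl i))) hv
  have := hT.inner_eigenvectorBasis_sub_smul t w i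
  rw [Module.End.mem_eigenspace_iff.mp hw, sub_self, inner_zero_right, eq_comm,
    mul_eq_zero] at this
  exact this.resolve_left (by linarith)

theorem inner_eigenvectorBasis_eq_zero_of_mem_orthogonal_negEigenspace (hT : T.IsSymmetric)
    {v : V} (hv : v ∈ (negEigenspace T)ᗮ) {i : Fin (finrank ℝ V)}
    (hi : hT.eigenvalues rfl i < 0) : ⟪hT.eigenvectorBasis rfl i, v⟫ = 0 :=
  Submodule.inner_right_of_mem_orthogonal (hT.eigenvectorBasis_mem_negEigenspace hi) hv

theorem inner_apply_self_le_of_mem_negEigenspace (hT : T.IsSymmetric) {a : ℝ}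
    (ha : ∀ t, Module.End.HasEigenvalue T t → a ≤ |t|) {v : V} (hv : v ∈ negEigenspace T) :
    ⟪T v, v⟫ ≤ -a * ‖v‖ ^ 2 := by
  rw [hT.inner_apply_self_eq_sum, ← (hT.eigenvectorBasis rfl).sum_sq_inner_right, Finset.mul_sum]
  refine Finset.sum_le_sum fun i _ => ?_
  by_cases hi : hT.eigenvalues rfl i < 0
  · have : a ≤ |hT.eigenvalues rfl i| := ha _ (hT.hasEigenvalue_eigenvalues rfl i)
    rw [abs_of_neg hi] at this
    exact mul_le_mul_of_nonneg_right (by linarith) (sq_nonneg _)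
  · simp [hT.inner_eigenvectorBasis_eq_zero_of_mem_negEigenspace hv (not_lt.mp hi)]

theorem le_inner_apply_self_of_mem_orthogonal_negEigenspace (hT : T.IsSymmetric) {a : ℝ}
    (ha : ∀ t, Module.End.HasEigenvalue T t → a ≤ |t|) {v : V} (hv : v ∈ (negEigenspace T)ᗮ) :
    a * ‖v‖ ^ 2 ≤ ⟪T v, v⟫ := by
  rw [hT.inner_apply_self_eq_sum, ← (hT.eigenvectorBasis rfl).sum_sq_inner_right, Finset.mul_sum]
  refine Finset.sum_le_sum fun i _ => ?_
  by_cases hi : hT.eigenvalues rfl i < 0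
  · simp [hT.inner_eigenvectorBasis_eq_zero_of_mem_orthogonal_negEigenspace hv hi]
  · have : a ≤ |hT.eigenvalues rfl i| := ha _ (hT.hasEigenvalue_eigenvalues rfl i)
    rw [abs_of_nonneg (not_lt.mp hi)] at this
    exact mul_le_mul_of_nonneg_right this (sq_nonneg _)

end LinearMap.IsSymmetric

section Perturbation

variable {V : Type*} [NormedAddCommGroup V] [InnerProductSpace ℝ V] [FiniteDimensional ℝ V]
  {S T : V →L[ℝ] V}

theorem disjoint_negEigenspace_orthogonal_negEigenspace
    (hT : (T : V →ₗ[ℝ] V).IsSymmetric) (hS : (S : V →ₗ[ℝ] V).IsSymmetric) {a b : ℝ}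
    (ha : ∀ t, Module.End.HasEigenvalue (T : V →ₗ[ℝ] V) t → a ≤ |t|)
    (hb : ∀ t, Module.End.HasEigenvalue (S : V →ₗ[ℝ] V) t → b ≤ |t|) (hST : ‖S - T‖ < a + b) :
    Disjoint (negEigenspace (S : V →ₗ[ℝ] V)) (negEigenspace (T : V →ₗ[ℝ] V))ᗮ := by
  refine Submodule.disjoint_def.mpr fun v hvS hvT => ?_
  have hSv := hS.inner_apply_self_le_of_mem_negEigenspace hb hvS
  have hTv := hT.le_inner_apply_self_of_mem_orthogonal_negEigenspace ha hvT
  have hdiff : ⟪T v, v⟫ - ⟪S v, v⟫ ≤ ‖S - T‖ * ‖v‖ ^ 2 := calc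
    ⟪T v, v⟫ - ⟪S v, v⟫ = ⟪(T - S) v, v⟫ := by
      rw [sub_apply, inner_sub_left]
    _ ≤ ‖(T - S) v‖ * ‖v‖ := real_inner_le_norm _ _
    _ ≤ ‖S - T‖ * ‖v‖ ^ 2 := by
      rw [norm_sub_rev, sq, ← mul_assoc]; gcongr; exact (T - S).le_opNorm v
  simp only [ContinuousLinearMap.coe_coe] at hSv hTv
  have : ‖v‖ ^ 2 ≤ 0 := by nlinarith
  simpa using this

theorem finrank_negEigenspace_le_of_norm_sub_lt
    (hT : (T : V →ₗ[ℝ] V).IsSymmetric) (hS : (S : V →ₗ[ℝ] V).IsSymmetric) {a b : ℝ}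
    (ha : ∀ t, Module.End.HasEigenvalue (T : V →ₗ[ℝ] V) t → a ≤ |t|)
    (hb : ∀ t, Module.End.HasEigenvalue (S : V →ₗ[ℝ] V) t → b ≤ |t|) (hST : ‖S - T‖ < a + b) :
    finrank ℝ (negEigenspace (S : V →ₗ[ℝ] V)) ≤ finrank ℝ (negEigenspace (T : V →ₗ[ℝ] V)) := by
  have := Submodule.finrank_add_finrank_le_of_disjoint
    (disjoint_negEigenspace_orthogonal_negEigenspace hT hS ha hb hST)
  have := (negEigenspace (T : V →ₗ[ℝ] V)).finrank_add_finrank_orthogonal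
  omega

theorem finrank_negEigenspace_eq_of_norm_sub_lt
    (hT : (T : V →ₗ[ℝ] V).IsSymmetric) (hS : (S : V →ₗ[ℝ] V).IsSymmetric) {a b : ℝ}
    (ha : ∀ t, Module.End.HasEigenvalue (T : V →ₗ[ℝ] V) t → a ≤ |t|)
    (hb : ∀ t, Module.End.HasEigenvalue (S : V →ₗ[ℝ] V) t → b ≤ |t|) (hST : ‖S - T‖ < a + b) :
    finrank ℝ (negEigenspace (S : V →ₗ[ℝ] V)) = finrank ℝ (negEigenspace (T : V →ₗ[ℝ] V)) :=
  (finrank_negEigenspace_le_of_norm_sub_lt hT hS ha hb hST).antisymm <|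
    finrank_negEigenspace_le_of_norm_sub_lt hS hT hb ha (by rwa [norm_sub_rev, add_comm])

end Perturbation

section Hessian

variable {V : Type*} [NormedAddCommGroup V] [InnerProductSpace ℝ V] [CompleteSpace V]
  {f g : V → ℝ}

theorem gradient_eq_toDual_symm_comp_fderiv (f : V → ℝ) :
    gradient f = (toDual ℝ V).symm ∘ fderiv ℝ f := rfl

theorem inner_fderiv_gradient_apply (x u w : V) :
    ⟪fderiv ℝ (gradient f) x u, w⟫ = fderiv ℝ (fderiv ℝ f) x u w := by
  have hcomp : fderiv ℝ (gradient f) x =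
      ((toDual ℝ V).symm.toContinuousLinearEquiv : StrongDual ℝ V ≃L[ℝ] V).toContinuousLinearMap.comp
        (fderiv ℝ (fderiv ℝ f) x) :=
    (toDual ℝ V).symm.toContinuousLinearEquiv.comp_fderiv
  rw [hcomp]
  exact toDual_symm_apply

theorem isSymmetric_fderiv_gradient {x : V} (hf : ContDiffAt ℝ 2 f x) :
    ((fderiv ℝ (gradient f) x : V →L[ℝ] V) : V →ₗ[ℝ] V).IsSymmetric := fun u w => by
  simp only [ContinuousLinearMap.coe_coe]
  rw [inner_fderiv_gradient_apply, real_inner_comm, inner_fderiv_gradient_apply]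
  exact hf.isSymmSndFDerivAt (by simp) u w

theorem differentiable_gradient (hf : ContDiff ℝ 2 f) : Differentiable ℝ (gradient f) :=
  (toDual ℝ V).symm.toContinuousLinearEquiv.differentiable.comp
    ((hf.fderiv_right (m := 1) (by norm_num)).differentiable (by norm_num))

theorem fderiv_gradient_add (hf : ContDiff ℝ 2 f) (hg : ContDiff ℝ 2 g) (x : V) :
    fderiv ℝ (gradient fun z => f z + g z) x =
      fderiv ℝ (gradient f) x + fderiv ℝ (gradient g) x := by
  have hsum : gradient (fun z => f z + g z) = fun z => gradient f z + gradient g z := by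
    funext z
    simp only [gradient_eq_toDual_symm_comp_fderiv, Function.comp_apply,
      fderiv_fun_add (hf.differentiable (by norm_num) z) (hg.differentiable (by norm_num) z),
      map_add]
  rw [hsum]
  exact fderiv_add (differentiable_gradient hf x) (differentiable_gradient hg x)

end Hessian

theorem morseIndex_eq_finrank_negEigenspace {d : ℕ}
    (T : Module.End ℝ (EuclideanSpace ℝ (Fin d))) :
    morseIndex T = finrank ℝ (negEigenspace T) := rfl

theorem statement10_general {d k : ℕ} (E Eδ : EuclideanSpace ℝ (Fin d) → ℝ)
    (hE : ContDiff ℝ 2 E) (hEδ : ContDiff ℝ 2 Eδ)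
    (xstar : EuclideanSpace ℝ (Fin d))
    (δ M μ L ε : ℝ) (hμ : 0 < μ)
    (hLip : ∀ x ∈ Metric.ball xstar δ, ∀ y ∈ Metric.ball xstar δ,
      ‖fderiv ℝ (gradient E) x - fderiv ℝ (gradient E) y‖ ≤ M * ‖x - y‖)
    (hmod : ∀ x ∈ Metric.ball xstar δ, ∀ lam : ℝ,
      Module.End.HasEigenvalue
        ((fderiv ℝ (gradient E) x).toLinearMap) lam → μ ≤ |lam| ∧ |lam| ≤ L)
    (hindex : ∀ x ∈ Metric.ball xstar δ,
      morseIndex ((fderiv ℝ (gradient E) x).toLinearMap) = k)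
    (hδLip : ∀ x ∈ Metric.ball xstar δ, ∀ y ∈ Metric.ball xstar δ,
      ‖fderiv ℝ (gradient Eδ) x - fderiv ℝ (gradient Eδ) y‖ ≤ ε * ‖x - y‖)
    (hδHess : ∀ x ∈ Metric.ball xstar δ, ‖fderiv ℝ (gradient Eδ) x‖ ≤ ε)
    (hεsmall : ε ≤ min (min (μ / 2) (μ ^ 2 / (32 * M))) (min (μ * δ / 12) M))
    (xnn : EuclideanSpace ℝ (Fin d))
    (hxnnclose : ‖xnn - xstar‖ ≤ 4 * ε / μ) :
    (∀ x ∈ Metric.ball xnn (2 * δ / 3), ∀ y ∈ Metric.ball xnn (2 * δ / 3),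
        ‖fderiv ℝ (gradient (fun z => E z + Eδ z)) x
            - fderiv ℝ (gradient (fun z => E z + Eδ z)) y‖ ≤ 2 * M * ‖x - y‖) ∧
      (∀ x ∈ Metric.ball xnn (2 * δ / 3), ∀ lam : ℝ,
        Module.End.HasEigenvalue
          ((fderiv ℝ (gradient (fun z => E z + Eδ z)) x).toLinearMap) lam →
            μ - ε ≤ |lam| ∧ |lam| ≤ L + ε) ∧
      (∀ x ∈ Metric.ball xnn (2 * δ / 3),
        morseIndex ((fderiv ℝ (gradient (fun z => E z + Eδ z)) x).toLinearMap) = k) := by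
  have hεμ : ε ≤ μ / 2 := hεsmall.trans ((min_le_left _ _).trans (min_le_left _ _))
  have hεδ : ε ≤ μ * δ / 12 := hεsmall.trans ((min_le_right _ _).trans (min_le_left _ _))
  have hεM : ε ≤ M := hεsmall.trans ((min_le_right _ _).trans (min_le_right _ _))
  have hball : Metric.ball xnn (2 * δ / 3) ⊆ Metric.ball xstar δ := by
    have hclose : dist xnn xstar ≤ δ / 3 := by
      rw [dist_eq_norm]
      refine hxnnclose.trans ?_
      rw [div_le_iff₀ hμ]
      linarith
    exact Metric.ball_subset_ball' (by linarith)
  have hsum := fderiv_gradient_add hE hEδ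
  have hsymm x := isSymmetric_fderiv_gradient (hE.contDiffAt (x := x))
  have hpert : ∀ x ∈ Metric.ball xnn (2 * δ / 3), ∀ v,
      ‖(fderiv ℝ (gradient E) x + fderiv ℝ (gradient Eδ) x) v - fderiv ℝ (gradient E) x v‖ ≤
        ε * ‖v‖ := fun x hx v => by
    simpa using (fderiv ℝ (gradient Eδ) x).le_of_opNorm_le (hδHess x (hball hx)) v
  have heig : ∀ x ∈ Metric.ball xnn (2 * δ / 3), ∀ lam : ℝ, Module.End.HasEigenvalue
      ((fderiv ℝ (gradient E) x + fderiv ℝ (gradient Eδ) x).toLinearMap) lam →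
        |lam| ∈ Set.Icc (μ - ε) (L + ε) := fun x hx _ hlam =>
    (hsymm x).abs_eigenvalue_mem_Icc_of_norm_sub_le (hmod x (hball hx)) (hpert x hx) hlam
  refine ⟨fun x hx y hy => ?_, fun x hx lam hlam => ?_, fun x hx => ?_⟩
  · rw [hsum, hsum, add_sub_add_comm]
    calc _ ≤ M * ‖x - y‖ + ε * ‖x - y‖ :=
          norm_add_le_of_le (hLip x (hball hx) y (hball hy)) (hδLip x (hball hx) y (hball hy))
      _ ≤ 2 * M * ‖x - y‖ := by nlinarith [norm_nonneg (x - y)]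
  · rw [hsum] at hlam
    exact heig x hx lam hlam
  · have hsymmSum := hsum x ▸ isSymmetric_fderiv_gradient (hE.add hEδ).contDiffAt
    rw [morseIndex_eq_finrank_negEigenspace, hsum, finrank_negEigenspace_eq_of_norm_sub_lt
      (hsymm x) hsymmSum (fun t ht => (hmod x (hball hx) t ht).1) (fun t ht => (heig x hx t ht).1)
      (by rw [add_sub_cancel_left]; linarith [hδHess x (hball hx)])]
    exact hindex x (hball hx)

/-- setup of Theorem 4.8: under the hypotheses of Theorem 4.6 with `x*`
an index-`k` critical point of `E`, the surrogate `E_NN = E + E_δ` has, on the ball of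
radius `2δ/3` around any critical point `x*_NN` of `E_NN` with `‖x*_NN - x*‖ ≤ 4ε/μ`,
a `2M`-Lipschitz Hessian whose eigenvalue moduli lie in `[μ-ε, L+ε]` with exactly `k`
negative eigenvalues. -/
theorem statement10 {d k : ℕ} (E Eδ : EuclideanSpace ℝ (Fin d) → ℝ)
    (hE : ContDiff ℝ 2 E) (hEδ : ContDiff ℝ 2 Eδ)
    (xstar : EuclideanSpace ℝ (Fin d)) (hcrit : gradient E xstar = 0)
    (δ M μ L ε : ℝ) (hδ : 0 < δ) (hM : 0 < M) (hμ : 0 < μ) (hμL : μ < L)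
    (hεpos : 0 < ε)
    (hLip : ∀ x ∈ Metric.ball xstar δ, ∀ y ∈ Metric.ball xstar δ,
      ‖fderiv ℝ (gradient E) x - fderiv ℝ (gradient E) y‖ ≤ M * ‖x - y‖)
    (hmod : ∀ x ∈ Metric.ball xstar δ, ∀ lam : ℝ,
      Module.End.HasEigenvalue
        ((fderiv ℝ (gradient E) x).toLinearMap) lam → μ ≤ |lam| ∧ |lam| ≤ L)
    (hindex : ∀ x ∈ Metric.ball xstar δ,
      morseIndex ((fderiv ℝ (gradient E) x).toLinearMap) = k)
    (hδLip : ∀ x ∈ Metric.ball xstar δ, ∀ y ∈ Metric.ball xstar δ,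
      ‖fderiv ℝ (gradient Eδ) x - fderiv ℝ (gradient Eδ) y‖ ≤ ε * ‖x - y‖)
    (hδHess : ∀ x ∈ Metric.ball xstar δ, ‖fderiv ℝ (gradient Eδ) x‖ ≤ ε)
    (hδGrad : ∀ x ∈ Metric.ball xstar δ, ‖gradient Eδ x‖ ≤ ε)
    (hεsmall : ε ≤ min (min (μ / 2) (μ ^ 2 / (32 * M))) (min (μ * δ / 12) M))
    (xnn : EuclideanSpace ℝ (Fin d))
    (hxnncrit : gradient (fun x => E x + Eδ x) xnn = 0)
    (hxnnclose : ‖xnn - xstar‖ ≤ 4 * ε / μ) :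
    (∀ x ∈ Metric.ball xnn (2 * δ / 3), ∀ y ∈ Metric.ball xnn (2 * δ / 3),
        ‖fderiv ℝ (gradient (fun z => E z + Eδ z)) x
            - fderiv ℝ (gradient (fun z => E z + Eδ z)) y‖ ≤ 2 * M * ‖x - y‖) ∧
      (∀ x ∈ Metric.ball xnn (2 * δ / 3), ∀ lam : ℝ,
        Module.End.HasEigenvalue
          ((fderiv ℝ (gradient (fun z => E z + Eδ z)) x).toLinearMap) lam →
            μ - ε ≤ |lam| ∧ |lam| ≤ L + ε) ∧
      (∀ x ∈ Metric.ball xnn (2 * δ / 3),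
        morseIndex ((fderiv ℝ (gradient (fun z => E z + Eδ z)) x).toLinearMap) = k) :=
  statement10_general E Eδ hE hEδ xstar δ M μ L ε hμ hLip hmod hindex hδLip hδHess hεsmall xnn
    hxnnclose
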